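/- (Offline error bound, estimated ALP.) Let v* : S → ℝ be a fixed point of B, let ρ and ρ̄ be distributions on S, R a constant-closed set of functions S → ℝ, D ⊆ S × A a set of sampled state–action pairs, T̃ a set of functions S → ℝ, and ε_p, ε_s, ε_c ≥ 0. Assume: (i) every v ∈ R that is D-feasible is ε_p-transitive-feasible; (ii) sandwich condition: every v ∈ R that is (D, −ε_s)-feasible belongs to T̃, and every v ∈ T̃ ∩ R is (D, ε_s)-feasible; (iii) |ρᵀv − ρ̄ᵀv| ≤ ε_c for every v ∈ R; (iv) v̂ ∈ R is transitive-feasible and minimizes ρᵀ over all transitive-feasible elements of R; (v) ṽ ∈ T̃ ∩ R minimizes ρ̄ᵀ over T̃ ∩ R. Then for every v ∈ R, ‖ṽ − v*‖_{1,ρ} ≤ (2/(1−γ)) * ‖v − v*‖_∞ + 2ε_c + (3ε_s + 2ε_p)/(1−γ). -/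

import Mathlib

/-!
Every comparison is made by shifting by constants. Since `P` is stochastic, adding `c` to `v`
adds `γ c` to every Bellman backup, so it turns `(D, δ)`-feasibility into `(D, δ - (1 - γ) c)`-feasibility.
With `c = ε_s / (1 - γ)` this moves `ṽ` into the `D`-feasible set (hence `ε_p`-transitive-feasible,
so `ṽ ≥ v* - (ε_s + ε_p)/(1 - γ)`), and moves `v̂` into `T̃`, so that `ρᵀṽ ≤ ρᵀv̂ + c + 2ε_c`.
Shifting an arbitrary `v ∈ R` with `‖v - v*‖_∞ = k` by `(1 + γ) k / (1 - γ)` makes it transitive-feasible,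
so `ρᵀv̂ ≤ ρᵀv* + 2k / (1 - γ)`. Finally the lower bound on `ṽ - v*` turns
`‖ṽ - v*‖_{1,ρ}` into `ρᵀṽ - ρᵀv*` up to twice that bound.
-/

open Finset

section WeightedSum

variable {ι : Type*} [Fintype ι] {w : ι → ℝ}

theorem sum_mul_add_const_of_sum_eq_one (hw : ∑ i, w i = 1) (f : ι → ℝ) (c : ℝ) :
    ∑ i, w i * (f i + c) = ∑ i, w i * f i + c := by
  simp only [mul_add, sum_add_distrib, ← sum_mul, hw, one_mul]

theorem sum_mul_le_sum_mul_of_nonneg (hw : ∀ i, 0 ≤ w i) {f g : ι → ℝ} (hfg : ∀ i, f i ≤ g i) :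
    ∑ i, w i * f i ≤ ∑ i, w i * g i :=
  sum_le_sum fun i _ => mul_le_mul_of_nonneg_left (hfg i) (hw i)

theorem sum_mul_abs_sub_le (hw0 : ∀ i, 0 ≤ w i) (hw1 : ∑ i, w i = 1) {f g : ι → ℝ} {d : ℝ}
    (hd : 0 ≤ d) (hgf : ∀ i, g i - f i ≤ d) :
    ∑ i, w i * |f i - g i| ≤ ∑ i, w i * f i - ∑ i, w i * g i + 2 * d :=
  calc ∑ i, w i * |f i - g i| ≤ ∑ i, w i * ((f i - g i) + 2 * d) :=
        sum_mul_le_sum_mul_of_nonneg hw0 fun i => abs_le'.2 ⟨by linarith, by linarith [hgf i]⟩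
    _ = ∑ i, w i * f i - ∑ i, w i * g i + 2 * d := by
        rw [sum_mul_add_const_of_sum_eq_one hw1]
        simp only [mul_sub, sum_sub_distrib]

end WeightedSum

namespace FiniteMDP

variable {S A : Type*} [Fintype S] (P : A → S → S → ℝ) (r : A → S → ℝ) (γ : ℝ)

def qValue (v : S → ℝ) (a : A) (s : S) : ℝ :=
  r a s + γ * ∑ s', P a s s' * v s'

def bellman [Fintype A] [Nonempty A] (v : S → ℝ) (s : S) : ℝ :=
  univ.sup' univ_nonempty (qValue P r γ v · s)

def IsFeasibleOn (D : Set (S × A)) (δ : ℝ) (v : S → ℝ) : Prop :=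
  ∀ p ∈ D, v p.1 ≥ qValue P r γ v p.2 p.1 - δ

variable {P r γ}

theorem qValue_add_const (hP1 : ∀ a s, ∑ s', P a s s' = 1) (v : S → ℝ) (c : ℝ) (a : A) (s : S) :
    qValue P r γ (fun s' => v s' + c) a s = qValue P r γ v a s + γ * c := by
  simp only [qValue, sum_mul_add_const_of_sum_eq_one (hP1 a s)]
  ring

theorem qValue_mono (hP0 : ∀ a s s', 0 ≤ P a s s') (hγ0 : 0 ≤ γ) {v w : S → ℝ}
    (hvw : ∀ s, v s ≤ w s) (a : A) (s : S) : qValue P r γ v a s ≤ qValue P r γ w a s := by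
  unfold qValue
  gcongr r a s + γ * ?_
  exact sum_mul_le_sum_mul_of_nonneg (hP0 a s) hvw

theorem qValue_le_add_of_le_add (hP0 : ∀ a s s', 0 ≤ P a s s') (hP1 : ∀ a s, ∑ s', P a s s' = 1)
    (hγ0 : 0 ≤ γ) {v w : S → ℝ} {m : ℝ} (h : ∀ s, v s ≤ w s + m) (a : A) (s : S) :
    qValue P r γ v a s ≤ qValue P r γ w a s + γ * m :=
  (qValue_mono hP0 hγ0 h a s).trans_eq (qValue_add_const hP1 w m a s)

theorem IsFeasibleOn.add_const (hP1 : ∀ a s, ∑ s', P a s s' = 1) {D : Set (S × A)} {δ : ℝ}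
    {v : S → ℝ} (hv : IsFeasibleOn P r γ D δ v) (c : ℝ) :
    IsFeasibleOn P r γ D (δ - (1 - γ) * c) (fun s => v s + c) := by
  intro p hp
  have := hv p hp
  rw [qValue_add_const hP1]
  linarith

variable [Fintype A] [Nonempty A]

theorem qValue_le_bellman (v : S → ℝ) (a : A) (s : S) : qValue P r γ v a s ≤ bellman P r γ v s :=
  le_sup' (qValue P r γ v · s) (mem_univ a)

theorem isFeasibleOn_zero_of_bellman_le {v : S → ℝ} (hv : ∀ s, bellman P r γ v s ≤ v s)
    (D : Set (S × A)) : IsFeasibleOn P r γ D 0 v := fun p _ => by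
  rw [sub_zero]
  exact (qValue_le_bellman v p.2 p.1).trans (hv p.1)

theorem bellman_le_add_of_le_add (hP0 : ∀ a s s', 0 ≤ P a s s') (hP1 : ∀ a s, ∑ s', P a s s' = 1)
    (hγ0 : 0 ≤ γ) {v w : S → ℝ} {m : ℝ} (h : ∀ s, v s ≤ w s + m) (s : S) :
    bellman P r γ v s ≤ bellman P r γ w s + γ * m :=
  sup'_le _ _ fun a _ =>
    (qValue_le_add_of_le_add hP0 hP1 hγ0 h a s).trans (add_le_add_left (qValue_le_bellman w a s) _)

theorem sub_le_div_of_bellman_sub_le (hP0 : ∀ a s s', 0 ≤ P a s s')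
    (hP1 : ∀ a s, ∑ s', P a s s' = 1) (hγ0 : 0 ≤ γ) (hγ1 : γ < 1) {vstar u : S → ℝ} {ε : ℝ}
    (hfix : bellman P r γ vstar = vstar) (hu : ∀ s, u s ≥ bellman P r γ u s - ε) (s : S) :
    vstar s - u s ≤ ε / (1 - γ) := by
  have : Nonempty S := ⟨s⟩
  obtain ⟨s₀, hs₀⟩ := Finite.exists_max fun s => vstar s - u s
  have hle : ∀ s, vstar s ≤ u s + (vstar s₀ - u s₀) := fun s => by linarith [hs₀ s]
  have hmax : vstar s₀ - u s₀ ≤ ε + γ * (vstar s₀ - u s₀) := by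
    have := bellman_le_add_of_le_add (r := r) hP0 hP1 hγ0 hle s₀
    rw [hfix] at this
    linarith [hu s₀]
  rw [le_div_iff₀ (by linarith)]
  nlinarith [hs₀ s]

theorem bellman_add_const_le_of_abs_sub_le (hP0 : ∀ a s s', 0 ≤ P a s s')
    (hP1 : ∀ a s, ∑ s', P a s s' = 1) (hγ0 : 0 ≤ γ) (hγ1 : γ < 1) {vstar v : S → ℝ} {k : ℝ}
    (hfix : bellman P r γ vstar = vstar) (hk : ∀ s, |v s - vstar s| ≤ k) (s : S) :
    bellman P r γ (fun s => v s + (1 + γ) * k / (1 - γ)) s ≤ v s + (1 + γ) * k / (1 - γ) := by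
  set c := (1 + γ) * k / (1 - γ)
  have hc : (1 - γ) * c = (1 + γ) * k := mul_div_cancel₀ _ (by linarith)
  have hle : ∀ s, v s + c ≤ vstar s + (k + c) := fun s => by linarith [(abs_le.1 (hk s)).2]
  have := bellman_le_add_of_le_add (r := r) hP0 hP1 hγ0 hle s
  rw [hfix] at this
  linarith [(abs_le.1 (hk s)).1]

theorem alp_objective_le_of_abs_sub_le (hP0 : ∀ a s s', 0 ≤ P a s s')
    (hP1 : ∀ a s, ∑ s', P a s s' = 1) (hγ0 : 0 ≤ γ) (hγ1 : γ < 1) {vstar : S → ℝ}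
    (hfix : bellman P r γ vstar = vstar) {ρ : S → ℝ} (hρ0 : ∀ s, ρ s ≥ 0) (hρ1 : ∑ s, ρ s = 1)
    {R : Set (S → ℝ)} (hR : ∀ u ∈ R, ∀ k : ℝ, (fun s => u s + k) ∈ R) {vhat : S → ℝ}
    (hvhat : ∀ u ∈ R, (∀ s, u s ≥ bellman P r γ u s) → ∑ s, ρ s * vhat s ≤ ∑ s, ρ s * u s)
    {v : S → ℝ} (hv : v ∈ R) {k : ℝ} (hk : ∀ s, |v s - vstar s| ≤ k) :
    ∑ s, ρ s * vhat s ≤ ∑ s, ρ s * vstar s + 2 / (1 - γ) * k := by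
  have hopt := hvhat _ (hR v hv _) (bellman_add_const_le_of_abs_sub_le hP0 hP1 hγ0 hγ1 hfix hk)
  have hvk := sum_mul_le_sum_mul_of_nonneg hρ0 (f := v) (g := fun s => vstar s + k) fun s => by
    linarith [(abs_le.1 (hk s)).2]
  rw [sum_mul_add_const_of_sum_eq_one hρ1] at hopt hvk
  have hcoef : k + (1 + γ) * k / (1 - γ) = 2 / (1 - γ) * k := by
    field_simp [(sub_pos.2 hγ1).ne']
    ring
  linarith

end FiniteMDP

open FiniteMDP

theorem offline_error_bound_estimated_ALP_general
    {S A : Type*} [Fintype S] [Nonempty S] [Fintype A] [Nonempty A]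
    (P : A → S → S → ℝ) (r : A → S → ℝ) (γ : ℝ)
    (hP0 : ∀ a s s', 0 ≤ P a s s') (hP1 : ∀ a s, ∑ s', P a s s' = 1)
    (hγ0 : 0 ≤ γ) (hγ1 : γ < 1)
    (B : (S → ℝ) → S → ℝ)
    (hB : ∀ v s, B v s =
      Finset.univ.sup' Finset.univ_nonempty
        (fun a => r a s + γ * ∑ s', P a s s' * v s'))
    (vstar : S → ℝ) (hfix : B vstar = vstar)
    (ρ ρbar : S → ℝ)
    (hρ0 : ∀ s, ρ s ≥ 0) (hρ1 : ∑ s, ρ s = 1)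
    (R : Set (S → ℝ))
    (hR : ∀ u ∈ R, ∀ k : ℝ, (fun s => u s + k) ∈ R)
    (D : Set (S × A)) (Ttilde : Set (S → ℝ))
    (εp εs εc : ℝ) (hεp : 0 ≤ εp) (hεs : 0 ≤ εs)
    -- (i) every D-feasible v ∈ R is εp-transitive-feasible
    (hSampling : ∀ v ∈ R,
      (∀ p ∈ D, v p.1 ≥ r p.2 p.1 + γ * ∑ s', P p.2 p.1 s' * v s') →
      (∀ s, v s ≥ B v s - εp))
    -- (ii) sandwich condition on the estimated feasible set
    (hSandwich1 : ∀ v ∈ R,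
      (∀ p ∈ D, v p.1 ≥ r p.2 p.1 + γ * (∑ s', P p.2 p.1 s' * v s') - (-εs)) →
      v ∈ Ttilde)
    (hSandwich2 : ∀ v ∈ Ttilde ∩ R,
      ∀ p ∈ D, v p.1 ≥ r p.2 p.1 + γ * (∑ s', P p.2 p.1 s' * v s') - εs)
    -- (iii) objective estimation error
    (hObj : ∀ v ∈ R, |(∑ s, ρ s * v s) - (∑ s, ρbar s * v s)| ≤ εc)
    -- (iv) vhat optimal for the full ALP
    (vhat : S → ℝ) (hvhatR : vhat ∈ R) (hvhatTF : ∀ s, vhat s ≥ B vhat s)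
    (hvhatOpt : ∀ u ∈ R, (∀ s, u s ≥ B u s) →
      ∑ s, ρ s * vhat s ≤ ∑ s, ρ s * u s)
    -- (v) vtilde optimal for the estimated ALP
    (vtilde : S → ℝ) (hvtilde : vtilde ∈ Ttilde ∩ R)
    (hvtildeOpt : ∀ u ∈ Ttilde ∩ R,
      ∑ s, ρbar s * vtilde s ≤ ∑ s, ρbar s * u s) :
    ∀ v ∈ R,
      ∑ s, ρ s * |vtilde s - vstar s| ≤
        (2 / (1 - γ)) *
          Finset.univ.sup' Finset.univ_nonempty (fun s => |v s - vstar s|)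
        + 2 * εc + (3 * εs + 2 * εp) / (1 - γ) := by
  intro v hv
  obtain rfl : B = bellman P r γ := funext fun v => funext (hB v)
  set k := univ.sup' univ_nonempty fun s => |v s - vstar s|
  have hk : ∀ s, |v s - vstar s| ≤ k := fun s => le_sup' (fun s => |v s - vstar s|) (mem_univ s)
  have h1γ : 1 - γ ≠ 0 := (sub_pos.2 hγ1).ne'
  set c := εs / (1 - γ)
  have hc : (1 - γ) * c = εs := mul_div_cancel₀ _ h1γ
  have hvtilde_low : ∀ s, vstar s - vtilde s ≤ (εs + εp) / (1 - γ) := by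
    have hfeas := IsFeasibleOn.add_const hP1 (hSandwich2 vtilde hvtilde) c
    rw [hc, sub_self] at hfeas
    have htf := hSampling _ (hR _ hvtilde.2 c) fun p hp => by
      have := hfeas p hp
      rwa [sub_zero] at this
    intro s
    have := sub_le_div_of_bellman_sub_le hP0 hP1 hγ0 hγ1 hfix htf s
    rw [add_div]
    linarith
  have hvhat_shift : (fun s => vhat s + c) ∈ Ttilde ∩ R := by
    have hfeas := (isFeasibleOn_zero_of_bellman_le hvhatTF D).add_const hP1 c
    rw [hc, zero_sub] at hfeas
    exact ⟨hSandwich1 _ (hR _ hvhatR c) hfeas, hR _ hvhatR c⟩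
  have hvhat_le := alp_objective_le_of_abs_sub_le hP0 hP1 hγ0 hγ1 hfix hρ0 hρ1 hR hvhatOpt hv hk
  have hvtilde_le : ∑ s, ρ s * vtilde s ≤ ∑ s, ρ s * vhat s + c + 2 * εc := by
    have hvtilde_obj := abs_le.1 (hObj _ hvtilde.2)
    have hvhat_obj := abs_le.1 (hObj _ hvhat_shift.2)
    rw [sum_mul_add_const_of_sum_eq_one hρ1] at hvhat_obj
    linarith [hvtildeOpt _ hvhat_shift]
  have hL1 := sum_mul_abs_sub_le hρ0 hρ1 (div_nonneg (by linarith) (by linarith)) hvtilde_low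
  have hε_coef : c + 2 * ((εs + εp) / (1 - γ)) = (3 * εs + 2 * εp) / (1 - γ) := by
    field_simp
    linear_combination hc
  linarith

theorem offline_error_bound_estimated_ALP
    {S A : Type*} [Fintype S] [Nonempty S] [Fintype A] [Nonempty A]
    (P : A → S → S → ℝ) (r : A → S → ℝ) (γ : ℝ)
    (hP0 : ∀ a s s', 0 ≤ P a s s') (hP1 : ∀ a s, ∑ s', P a s s' = 1)
    (hγ0 : 0 ≤ γ) (hγ1 : γ < 1)
    (B : (S → ℝ) → S → ℝ)
    (hB : ∀ v s, B v s =
      Finset.univ.sup' Finset.univ_nonempty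
        (fun a => r a s + γ * ∑ s', P a s s' * v s'))
    (vstar : S → ℝ) (hfix : B vstar = vstar)
    (ρ ρbar : S → ℝ)
    (hρ0 : ∀ s, ρ s ≥ 0) (hρ1 : ∑ s, ρ s = 1)
    (hρbar0 : ∀ s, ρbar s ≥ 0) (hρbar1 : ∑ s, ρbar s = 1)
    (R : Set (S → ℝ))
    (hR : ∀ u ∈ R, ∀ k : ℝ, (fun s => u s + k) ∈ R)
    (D : Set (S × A)) (Ttilde : Set (S → ℝ))
    (εp εs εc : ℝ) (hεp : 0 ≤ εp) (hεs : 0 ≤ εs) (hεc : 0 ≤ εc)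
    -- (i) every D-feasible v ∈ R is εp-transitive-feasible
    (hSampling : ∀ v ∈ R,
      (∀ p ∈ D, v p.1 ≥ r p.2 p.1 + γ * ∑ s', P p.2 p.1 s' * v s') →
      (∀ s, v s ≥ B v s - εp))
    -- (ii) sandwich condition on the estimated feasible set
    (hSandwich1 : ∀ v ∈ R,
      (∀ p ∈ D, v p.1 ≥ r p.2 p.1 + γ * (∑ s', P p.2 p.1 s' * v s') - (-εs)) →
      v ∈ Ttilde)
    (hSandwich2 : ∀ v ∈ Ttilde ∩ R,
      ∀ p ∈ D, v p.1 ≥ r p.2 p.1 + γ * (∑ s', P p.2 p.1 s' * v s') - εs)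
    -- (iii) objective estimation error
    (hObj : ∀ v ∈ R, |(∑ s, ρ s * v s) - (∑ s, ρbar s * v s)| ≤ εc)
    -- (iv) vhat optimal for the full ALP
    (vhat : S → ℝ) (hvhatR : vhat ∈ R) (hvhatTF : ∀ s, vhat s ≥ B vhat s)
    (hvhatOpt : ∀ u ∈ R, (∀ s, u s ≥ B u s) →
      ∑ s, ρ s * vhat s ≤ ∑ s, ρ s * u s)
    -- (v) vtilde optimal for the estimated ALP
    (vtilde : S → ℝ) (hvtilde : vtilde ∈ Ttilde ∩ R)
    (hvtildeOpt : ∀ u ∈ Ttilde ∩ R,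
      ∑ s, ρbar s * vtilde s ≤ ∑ s, ρbar s * u s) :
    ∀ v ∈ R,
      ∑ s, ρ s * |vtilde s - vstar s| ≤
        (2 / (1 - γ)) *
          Finset.univ.sup' Finset.univ_nonempty (fun s => |v s - vstar s|)
        + 2 * εc + (3 * εs + 2 * εp) / (1 - γ) :=
  offline_error_bound_estimated_ALP_general P r γ hP0 hP1 hγ0 hγ1 B hB vstar hfix ρ ρbar hρ0 hρ1 R
    hR D Ttilde εp εs εc hεp hεs hSampling hSandwich1 hSandwich2 hObj vhat hvhatR hvhatTF hvhatOpt
    vtilde hvtilde hvtildeOpt
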